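/- A connected convex bipartite graph G with |X| = |Y| has a Hamiltonian cycle if and only if the interval graph I obtained from G (by making any two Y-vertices with intersecting X-neighborhoods adjacent) has a Hamiltonian cycle. -/

import Mathlib

open Finset SimpleGraph

/-- A convex bipartite graph with parts `X = Fin n` (with its natural order giving the
convex ordering) and `Y`: each `y : Y` has a consecutive neighborhood in `Fin n`. -/
structure ConvexBip (n : ℕ) (Y : Type*) where
  adj : Fin n → Y → Prop
  convex : ∀ (y : Y) (i₁ i₂ i₃ : Fin n),
    i₁ ≤ i₂ → i₂ ≤ i₃ → adj i₁ y → adj i₃ y → adj i₂ y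

namespace ConvexBip

variable {n : ℕ} {Y : Type*}

/-- The underlying bipartite simple graph on `Fin n ⊕ Y`. -/
def toGraph (G : ConvexBip n Y) : SimpleGraph (Fin n ⊕ Y) where
  Adj u v := (∃ i y, u = Sum.inl i ∧ v = Sum.inr y ∧ G.adj i y) ∨
             (∃ i y, u = Sum.inr y ∧ v = Sum.inl i ∧ G.adj i y)
  symm := by constructor; rintro u v (⟨i, y, rfl, rfl, h⟩ | ⟨i, y, rfl, rfl, h⟩)
             · exact Or.inr ⟨i, y, rfl, rfl, h⟩
             · exact Or.inl ⟨i, y, rfl, rfl, h⟩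
  loopless := ⟨by rintro u (⟨i, y, rfl, h, _⟩ | ⟨i, y, rfl, h, _⟩) <;> simp_all⟩

/-- `N_G[X_{p..q}]`: the set of `y ∈ Y` whose whole neighborhood lies in `{x_p, …, x_q}`. -/
def NIn (G : ConvexBip n Y) (p q : Fin n) : Set Y :=
  {y | ∀ i, G.adj i y → p ≤ i ∧ i ≤ q}

/-- `N'_G[X_{p..q}]`: the set of `y ∈ Y` having at least two neighbors in `{x_p, …, x_q}`. -/
noncomputable def NIn' (G : ConvexBip n Y) (p q : Fin n) : Set Y :=
  {y | 2 ≤ {i : Fin n | G.adj i y ∧ p ≤ i ∧ i ≤ q}.ncard}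

/-- Degree of a vertex `y ∈ Y`. -/
noncomputable def degY (G : ConvexBip n Y) (y : Y) : ℕ := {i : Fin n | G.adj i y}.ncard

/-- Property A. -/
def PropertyA (G : ConvexBip n Y) : Prop :=
  (∀ p q : Fin n, p < q →
      ((p.val = 0 ∧ q.val < n - 1) ∨ (0 < p.val ∧ q.val = n - 1) ∨
        (0 < p.val ∧ q.val < n - 1)) →
      (G.NIn p q).ncard ≤ q.val - p.val) ∧
  (∀ (k : ℕ) (p q : Fin k → Fin n), 1 ≤ k → k ≤ n - 1 →
      (∀ i, p i < q i) → (∀ i i' : Fin k, i < i' → q i ≤ p i') →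
      (∑ i, ((q i).val - (p i).val)) ≤ (⋃ i, G.NIn' (p i) (q i)).ncard) ∧
  (∀ hn : 0 < n,
      (G.NIn ⟨0, hn⟩ ⟨n - 1, by omega⟩).ncard = n ∧
      (G.NIn' ⟨0, hn⟩ ⟨n - 1, by omega⟩).ncard = n)

/-- Property B. -/
def PropertyB (G : ConvexBip n Y) : Prop :=
  (∀ p q : Fin n, p < q →
      ((p.val = 0 ∧ q.val < n - 1) ∨ (0 < p.val ∧ q.val = n - 1) ∨
        (0 < p.val ∧ q.val < n - 1)) →
      (G.NIn p q).ncard ≤ q.val - p.val + 1) ∧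
  (∀ hn : 0 < n, (G.NIn ⟨0, hn⟩ ⟨n - 1, by omega⟩).ncard ≤ n + 1) ∧
  (∀ (k : ℕ) (p q : Fin k → Fin n), 1 ≤ k → k ≤ n - 1 →
      (∀ i, p i < q i) → (∀ i i' : Fin k, i < i' → q i ≤ p i') →
      (∑ i, ((q i).val - (p i).val)) ≤ (⋃ i, G.NIn' (p i) (q i)).ncard) ∧
  ({y : Y | G.degY y = 1}.ncard ≤ 2 ∧
    (2 ≤ n → ∀ (i : Fin n) (y y' : Y), y ≠ y' → G.degY y = 1 → G.degY y' = 1 →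
      G.adj i y → G.adj i y' → False))

/-- The interval `X_{p..q}` is maximal: `|N_G[X_{p..q}]| = q - p + 1` and no strictly
larger interval (within indices 2..n-1) has the analogous property. -/
def IsMaximalInt (G : ConvexBip n Y) (p q : Fin n) : Prop :=
  (G.NIn p q).ncard = q.val - p.val + 1 ∧
  ¬ ∃ p' q' : Fin n, 0 < p'.val ∧ q'.val < n - 1 ∧ p' ≤ p ∧ q ≤ q' ∧
      (p' < p ∨ q < q') ∧ (G.NIn p' q').ncard = q'.val - p'.val + 1

/-- Monotone convex bipartite graph. -/
def IsMonotone (G : ConvexBip n Y) : Prop :=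
  G.PropertyB ∧
  (¬ ∃ (y : Y) (k : Fin n), G.degY y = 1 ∧ G.adj k y ∧ 0 < k.val ∧ k.val < n - 1) ∧
  (¬ ∃ p q : Fin n, 0 < p.val ∧ p < q ∧ q.val < n - 1 ∧ G.IsMaximalInt p q)

/-- Non-monotone convex bipartite graph (satisfying Property B). -/
def IsNonMonotone (G : ConvexBip n Y) : Prop :=
  G.PropertyB ∧
  ((∃ (y : Y) (k : Fin n), G.degY y = 1 ∧ G.adj k y ∧ 0 < k.val ∧ k.val < n - 1) ∨
   (∃ p q : Fin n, 0 < p.val ∧ p < q ∧ q.val < n - 1 ∧ G.IsMaximalInt p q))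

/-- The interval graph obtained from `G`: keep all edges of `G` and make two distinct
`Y`-vertices adjacent whenever their neighborhoods in `X` intersect. -/
def intervalGraph (G : ConvexBip n Y) : SimpleGraph (Fin n ⊕ Y) where
  Adj u v := G.toGraph.Adj u v ∨
    (∃ y y', u = Sum.inr y ∧ v = Sum.inr y' ∧ y ≠ y' ∧ ∃ i, G.adj i y ∧ G.adj i y')
  symm := by
    constructor
    rintro u v (h | ⟨y, y', rfl, rfl, hne, i, h1, h2⟩)
    · exact Or.inl h.symm
    · exact Or.inr ⟨y', y, rfl, rfl, hne.symm, i, h2, h1⟩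
  loopless := by
    constructor
    rintro u (h | ⟨y, y', rfl, h, hne, _⟩)
    · exact G.toGraph.loopless.irrefl u h
    · exact hne (Sum.inr.inj h)

/-- `G` has a Hamiltonian cycle. -/
def HasHamCycle {V : Type*} [DecidableEq V] (H : SimpleGraph V) : Prop :=
  ∃ (v : V) (c : H.Walk v v), c.IsHamiltonianCycle

/-- `G` has a Hamiltonian path. -/
def HasHamPath {V : Type*} [DecidableEq V] (H : SimpleGraph V) : Prop :=
  ∃ (u v : V) (p : H.Walk u v), p.IsHamiltonian

/-- A maximal clique of a simple graph. -/
def IsMaxClique {V : Type*} (H : SimpleGraph V) (s : Set V) : Prop :=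
  H.IsClique s ∧ ∀ t : Set V, H.IsClique t → s ⊆ t → s = t

end ConvexBip

/-! Every edge of `G` is an edge of `I`, so a Hamiltonian cycle of `G` is one of `I`. Conversely,
`X` is independent in `I`, so a Hamiltonian cycle of `I` enters and leaves each of the `n`
vertices of `X` exactly once along `2n` different edges. The cycle has only `|X| + |Y| = 2n`
edges, so each of them meets `X`; in particular none joins two vertices of `Y`, and the cycle
lies in `G`. -/

theorem List.countP_or_of_disjoint {α : Type*} {p q : α → Bool} {l : List α}
    (h : ∀ a ∈ l, ¬(p a ∧ q a)) :
    l.countP (fun a => p a || q a) = l.countP p + l.countP q := by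
  induction l with
  | nil => rfl
  | cons a l ih =>
    have ha := h a List.mem_cons_self
    simp only [List.countP_cons, ih fun b hb => h b (List.mem_cons_of_mem a hb)]
    cases hp : p a <;> cases hq : q a <;> simp_all <;> omega

theorem List.Nodup.countP_mem_eq_card {α : Type*} [DecidableEq α] {l : List α} (hl : l.Nodup)
    {S : Finset α} (hS : ∀ x ∈ S, x ∈ l) : l.countP (· ∈ S) = #S := by
  rw [List.countP_eq_length_filter, ← List.toFinset_card_of_nodup (hl.filter _)]
  congr 1
  ext x
  simp only [List.mem_toFinset, List.mem_filter, decide_eq_true_eq]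
  exact ⟨And.right, fun hx => ⟨hS x hx, hx⟩⟩

namespace SimpleGraph.Walk

variable {V : Type*} [DecidableEq V] {H : SimpleGraph V} {v : V} {c : H.Walk v v}

theorem IsHamiltonianCycle.transfer (hc : c.IsHamiltonianCycle) {K : SimpleGraph V}
    (hK : ∀ e ∈ c.edges, e ∈ K.edgeSet) : (c.transfer K hK).IsHamiltonianCycle := by
  rw [isHamiltonianCycle_iff_isCycle_and_support_count_tail_eq_one, support_transfer] at *
  exact ⟨hc.1.transfer hK, hc.2⟩

theorem IsHamiltonianCycle.countP_snd_darts_mem (hc : c.IsHamiltonianCycle) (S : Finset V) :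
    c.darts.countP (·.snd ∈ S) = #S := by
  have hcount := (isHamiltonianCycle_iff_isCycle_and_support_count_tail_eq_one.1 hc).2
  have hnodup : c.support.tail.Nodup := List.nodup_iff_count_le_one.2 fun x => (hcount x).le
  have hmem : ∀ x ∈ S, x ∈ c.support.tail := fun x _ => List.count_pos_iff.1 (by rw [hcount x]; exact Nat.one_pos)
  calc c.darts.countP (·.snd ∈ S) = c.support.tail.countP (· ∈ S) := by
        rw [← map_snd_darts, List.countP_map]; rfl
    _ = #S := hnodup.countP_mem_eq_card hmem

theorem IsHamiltonianCycle.reverse [Fintype V] (hc : c.IsHamiltonianCycle) :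
    c.reverse.IsHamiltonianCycle := by
  rw [isHamiltonianCycle_iff_isCycle_and_length_eq] at *
  exact ⟨hc.1.reverse, (length_reverse c).trans hc.2⟩

theorem IsHamiltonianCycle.countP_fst_darts_mem [Fintype V] (hc : c.IsHamiltonianCycle)
    (S : Finset V) :
    c.darts.countP (·.fst ∈ S) = #S := by
  rw [← hc.reverse.countP_snd_darts_mem S, darts_reverse, List.countP_reverse, List.countP_map]
  rfl

theorem IsHamiltonianCycle.fst_mem_or_snd_mem_of_isIndepSet [Fintype V]
    (hc : c.IsHamiltonianCycle) {S : Finset V} (hS : H.IsIndepSet S)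
    (hcard : Fintype.card V = 2 * #S) {d : H.Dart} (hd : d ∈ c.darts) :
    d.fst ∈ S ∨ d.snd ∈ S := by
  have hdisj : ∀ d' ∈ c.darts, ¬(decide (d'.fst ∈ S) ∧ decide (d'.snd ∈ S)) := by
    simp only [decide_eq_true_eq]
    exact fun d' _ ⟨h₁, h₂⟩ => hS h₁ h₂ d'.adj.ne d'.adj
  have hall := List.countP_or_of_disjoint hdisj
  rw [hc.countP_fst_darts_mem, hc.countP_snd_darts_mem, ← two_mul, ← hcard, ← hc.length_eq,
    ← length_darts, List.countP_eq_length] at hall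
  simpa using hall d hd

end SimpleGraph.Walk

namespace ConvexBip

variable {n : ℕ} {Y : Type*} (G : ConvexBip n Y)

theorem toGraph_le_intervalGraph : G.toGraph ≤ G.intervalGraph := fun _ _ => Or.inl

theorem isIndepSet_range_inl_intervalGraph :
    G.intervalGraph.IsIndepSet (Set.range Sum.inl) := by
  rintro _ ⟨i, rfl⟩ _ ⟨j, rfl⟩ -
  simp [intervalGraph, toGraph]

theorem toGraph_adj_of_intervalGraph_adj {u w : Fin n ⊕ Y} (h : G.intervalGraph.Adj u w)
    (hX : u ∈ Set.range Sum.inl ∨ w ∈ Set.range Sum.inl) : G.toGraph.Adj u w := by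
  rcases h with h | ⟨y, y', rfl, rfl, -⟩
  · exact h
  · simp at hX

end ConvexBip

theorem stmt_12_general {n : ℕ} {Y : Type*} [Fintype Y] [DecidableEq Y]
    (G : ConvexBip n Y) (hcard : Fintype.card Y = n) :
    ConvexBip.HasHamCycle G.toGraph ↔ ConvexBip.HasHamCycle G.intervalGraph := by
  constructor
  · rintro ⟨v, c, hc⟩
    exact ⟨v, c.map (Hom.ofLE G.toGraph_le_intervalGraph), hc.map Function.bijective_id⟩
  · rintro ⟨v, c, hc⟩
    set X : Finset (Fin n ⊕ Y) := univ.map Function.Embedding.inl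
    have hX : (X : Set (Fin n ⊕ Y)) = Set.range Sum.inl := by simp [X]
    have hcardX : Fintype.card (Fin n ⊕ Y) = 2 * #X := by simp [X, hcard, two_mul]
    have hedges : ∀ e ∈ c.edges, e ∈ G.toGraph.edgeSet := by
      rintro _ he
      obtain ⟨d, hd, rfl⟩ := List.mem_map.1 he
      have hdX := hc.fst_mem_or_snd_mem_of_isIndepSet
        (hX ▸ G.isIndepSet_range_inl_intervalGraph) hcardX hd
      rw [← Finset.mem_coe, ← Finset.mem_coe, hX] at hdX
      exact G.toGraph_adj_of_intervalGraph_adj d.adj hdX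
    exact ⟨v, c.transfer _ hedges, hc.transfer hedges⟩

/-- Müller: a connected convex bipartite graph `G` with `|X| = |Y|` has a
Hamiltonian cycle iff its derived interval graph `I` has a Hamiltonian cycle. -/
theorem stmt_12 {n : ℕ} {Y : Type*} [Fintype Y] [DecidableEq Y]
    (G : ConvexBip n Y) (hconn : G.toGraph.Connected) (hcard : Fintype.card Y = n) :
    ConvexBip.HasHamCycle G.toGraph ↔ ConvexBip.HasHamCycle G.intervalGraph :=
  stmt_12_general G hcard
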